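/- If the collection P_f(N) of nonempty finite subsets of N is partitioned into finitely many cells C₁ ∪ ... ∪ C_r, then there exist an index i and a sequence ⟨Kₙ⟩ of pairwise disjoint nonempty finite subsets of N such that every finite union ⋃_{n∈H} Kₙ (H a nonempty finite set of indices) lies in C_i. -/

import Mathlib

/-! Colour a positive integer by the cell containing its set of binary digits. Hindman's
theorem for `(ℕ, +)` yields a sequence all of whose finite sums have one colour. Regrouping
it into sums over successive blocks, each block sum divisible by `2` to the power of the
previous one (such blocks exist by Erdős–Ginzburg–Ziv), gives terms whose binary digit sets
lie in disjoint increasing ranges; the digit set of a finite sum of such terms is the union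
of theirs. -/

open Finset

/-- Finite sums of a sequence over nonempty finite index sets. -/
def FS (x : ℕ → ℕ) : Set ℕ :=
  {s | ∃ H : Finset ℕ, H.Nonempty ∧ s = ∑ t ∈ H, x t}

/-- Finite products of a sequence over nonempty finite index sets. -/
def FP (x : ℕ → ℕ) : Set ℕ :=
  {s | ∃ H : Finset ℕ, H.Nonempty ∧ s = ∏ t ∈ H, x t}

/-- Block-ordered: every element of `H n` is below every element of `H (n+1)`. -/
def Blocked (H : ℕ → Finset ℕ) : Prop :=
  ∀ n, ∀ a ∈ H n, ∀ b ∈ H (n + 1), a < b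

/-- `y` is a sum subsystem of `x`. -/
def SumSubsystem (x y : ℕ → ℕ) : Prop :=
  ∃ H : ℕ → Finset ℕ, (∀ n, (H n).Nonempty) ∧ Blocked H ∧
    ∀ n, y n = ∑ t ∈ H n, x t

/-- `y` is a product subsystem of `x`. -/
def ProdSubsystem (x y : ℕ → ℕ) : Prop :=
  ∃ H : ℕ → Finset ℕ, (∀ n, (H n).Nonempty) ∧ Blocked H ∧
    ∀ n, y n = ∏ t ∈ H n, x t

/-- Additive IP set. -/
def AIP (A : Set ℕ) : Prop :=
  ∃ x : ℕ → ℕ, (∀ n, 0 < x n) ∧ FS x ⊆ A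

/-- Additive IP* set. -/
def AIPStar (A : Set ℕ) : Prop :=
  ∀ B : Set ℕ, AIP B → (A ∩ B).Nonempty

/-- Multiplicative IP set. -/
def MIP (A : Set ℕ) : Prop :=
  ∃ x : ℕ → ℕ, (∀ n, 0 < x n) ∧ FP x ⊆ A

/-- Multiplicative IP* set. -/
def MIPStar (A : Set ℕ) : Prop :=
  ∀ B : Set ℕ, MIP B → (A ∩ B).Nonempty

open Function

namespace Blocked

variable {H : ℕ → Finset ℕ}

theorem lt_of_lt (hH : Blocked H) (hne : ∀ n, (H n).Nonempty) {m n : ℕ} (hmn : m < n)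
    {a b : ℕ} (ha : a ∈ H m) (hb : b ∈ H n) : a < b := by
  induction n, hmn using Nat.le_induction generalizing b with
  | base => exact hH m a ha b hb
  | succ n hmn ih =>
    obtain ⟨c, hc⟩ := hne n
    exact (ih hc).trans (hH n c hc b hb)

theorem pairwise_disjoint (hH : Blocked H) (hne : ∀ n, (H n).Nonempty) :
    Pairwise (Disjoint on H) := by
  intro m n hmn
  rw [onFun, Finset.disjoint_left]
  intro a ham han
  rcases hmn.lt_or_gt with h | h
  · exact (hH.lt_of_lt hne h ham han).false
  · exact (hH.lt_of_lt hne h han ham).false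

end Blocked

theorem SumSubsystem.FS_subset {x y : ℕ → ℕ} (h : SumSubsystem x y) : FS y ⊆ FS x := by
  rintro _ ⟨I, hI, rfl⟩
  obtain ⟨B, hne, hB, hy⟩ := h
  refine ⟨I.biUnion B, hI.biUnion fun n _ => hne n, ?_⟩
  rw [sum_biUnion ((Blocked.pairwise_disjoint hB hne).set_pairwise _)]
  exact sum_congr rfl fun n _ => hy n

theorem FS_subset_hindman_FS (x : ℕ → ℕ) : FS x ⊆ Hindman.FS x := by
  rintro _ ⟨I, hI, rfl⟩
  exact Hindman.FS.finsetSum x I hI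

theorem Hindman.FS.pos {a : Stream' ℕ} (ha : ∀ n, 0 < a n) {m : ℕ} (hm : m ∈ Hindman.FS a) :
    0 < m := by
  induction hm with
  | head' a => exact ha 0
  | tail' _ _ _ ih => exact ih fun n => ha (n + 1)
  | cons' _ _ _ _ => exact Nat.add_pos_left (ha 0) _

theorem exists_AIP_of_cover {r : ℕ} (C : Fin r → Set ℕ) (hC : ∀ n, 0 < n → ∃ i, n ∈ C i) :
    ∃ i, AIP (C i) := by
  let D : Fin r → Set ℕ := fun i => C i ∩ Set.Ioi 0
  have hcov : Hindman.FS (fun _ => 1 : Stream' ℕ) ⊆ ⋃₀ Set.range D := by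
    intro m hm
    have hpos : 0 < m := Hindman.FS.pos (fun _ => Nat.one_pos) hm
    obtain ⟨i, hi⟩ := hC m hpos
    exact ⟨D i, ⟨i, rfl⟩, hi, hpos⟩
  obtain ⟨_, ⟨i, rfl⟩, x, hx⟩ := Hindman.FS_partition_regular _ _ (Set.finite_range D) hcov
  exact ⟨i, x, fun n => (hx (Hindman.FS.singleton x n)).2,
    (FS_subset_hindman_FS x).trans fun _ hm => (hx hm).1⟩

theorem exists_nonempty_dvd_sum (x : ℕ → ℕ) (s : ℕ) {m : ℕ} (hm : 0 < m) :
    ∃ G : Finset ℕ, G.Nonempty ∧ (∀ t ∈ G, s ≤ t) ∧ m ∣ ∑ t ∈ G, x t := by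
  obtain ⟨G, hGs, hcard, hdvd⟩ :=
    Int.erdos_ginzburg_ziv (fun t => (x t : ℤ)) (n := m) (s := Ico s (s + 2 * m))
      (by rw [Nat.card_Ico]; omega)
  refine ⟨G, card_pos.1 (hcard ▸ hm), fun t ht => (mem_Ico.1 (hGs ht)).1, ?_⟩
  exact_mod_cast hdvd

theorem exists_blocked_two_pow_dvd_sum (x : ℕ → ℕ) :
    ∃ B : ℕ → Finset ℕ, (∀ n, (B n).Nonempty) ∧ Blocked B ∧
      ∀ n, 2 ^ (∑ t ∈ B n, x t) ∣ ∑ t ∈ B (n + 1), x t := by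
  have hnext (F : Finset ℕ) : ∃ G : Finset ℕ, G.Nonempty ∧ (∀ a ∈ F, ∀ b ∈ G, a < b) ∧
      2 ^ (∑ t ∈ F, x t) ∣ ∑ t ∈ G, x t := by
    obtain ⟨G, hG, hlt, hdvd⟩ := exists_nonempty_dvd_sum x (F.sup id + 1) (Nat.two_pow_pos _)
    exact ⟨G, hG, fun a ha b hb => (le_sup (f := id) ha).trans_lt (hlt b hb), hdvd⟩
  choose g hne hlt hdvd using hnext
  refine ⟨fun n => g^[n + 1] ∅, fun n => ?_, fun n => ?_, fun n => ?_⟩ <;>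
    simp only [iterate_succ_apply']
  exacts [hne _, hlt _, hdvd _]

theorem AIP.exists_two_pow_dvd {A : Set ℕ} (hA : AIP A) :
    ∃ y : ℕ → ℕ, (∀ n, 0 < y n) ∧ (∀ n, 2 ^ y n ∣ y (n + 1)) ∧ FS y ⊆ A := by
  obtain ⟨x, hxpos, hxA⟩ := hA
  obtain ⟨B, hne, hB, hdvd⟩ := exists_blocked_two_pow_dvd_sum x
  have hsub : SumSubsystem x fun n => ∑ t ∈ B n, x t := ⟨B, hne, hB, fun _ => rfl⟩
  exact ⟨_, fun n => sum_pos (fun t _ => hxpos t) (hne n), hdvd, hsub.FS_subset.trans hxA⟩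

namespace Nat

theorem lt_of_mem_bitIndices {n j : ℕ} (hj : j ∈ n.bitIndices) : j < n :=
  Nat.lt_two_pow_self.trans_le (two_pow_le_of_mem_bitIndices hj)

theorem le_of_mem_bitIndices_of_two_pow_dvd {k n j : ℕ} (h : 2 ^ k ∣ n)
    (hj : j ∈ n.bitIndices) : k ≤ j := by
  obtain ⟨q, rfl⟩ := h
  rw [bitIndices_two_pow_mul] at hj
  obtain ⟨i, _, rfl⟩ := List.mem_map.1 hj
  omega

theorem bitIndices_toFinset_nonempty {n : ℕ} (hn : 0 < n) : n.bitIndices.toFinset.Nonempty := by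
  rw [nonempty_iff_ne_empty]
  intro h
  exact hn.ne' (by simpa [h] using (Finset.sum_toFinset_bitIndices_two_pow n).symm)

end Nat

theorem blocked_bitIndices_of_two_pow_dvd {y : ℕ → ℕ} (h : ∀ n, 2 ^ y n ∣ y (n + 1)) :
    Blocked fun n => (y n).bitIndices.toFinset := fun n _ ha _ hb =>
  (Nat.lt_of_mem_bitIndices (List.mem_toFinset.1 ha)).trans_le
    (Nat.le_of_mem_bitIndices_of_two_pow_dvd (h n) (List.mem_toFinset.1 hb))

theorem bitIndices_sum_eq_biUnion {y : ℕ → ℕ}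
    (h : Pairwise (Disjoint on fun n => (y n).bitIndices.toFinset)) (I : Finset ℕ) :
    (∑ n ∈ I, y n).bitIndices.toFinset = I.biUnion fun n => (y n).bitIndices.toFinset := by
  rw [← Finset.toFinset_bitIndices_sum_two_pow (I.biUnion _), sum_biUnion (h.set_pairwise _)]
  simp only [Finset.sum_toFinset_bitIndices_two_pow]

theorem hindman_finite_unions (r : ℕ) (C : Fin r → Set (Finset ℕ))
    (hcover : ∀ K : Finset ℕ, K.Nonempty → ∃ i, K ∈ C i) :
    ∃ (i : Fin r) (K : ℕ → Finset ℕ),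
      (∀ n, (K n).Nonempty) ∧
      (∀ m n, m ≠ n → Disjoint (K m) (K n)) ∧
      ∀ H : Finset ℕ, H.Nonempty → H.biUnion K ∈ C i := by
  obtain ⟨i, hi⟩ := exists_AIP_of_cover (fun i => {n | n.bitIndices.toFinset ∈ C i})
    fun n hn => hcover _ (Nat.bitIndices_toFinset_nonempty hn)
  obtain ⟨y, hpos, hdvd, hFS⟩ := hi.exists_two_pow_dvd
  have hne (n : ℕ) := Nat.bitIndices_toFinset_nonempty (hpos n)
  have hdisj := Blocked.pairwise_disjoint (blocked_bitIndices_of_two_pow_dvd hdvd) hne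
  refine ⟨i, _, hne, hdisj, fun H hH => ?_⟩
  rw [← bitIndices_sum_eq_biUnion hdisj]
  exact hFS ⟨H, hH, rfl⟩
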